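/- Let β be a (φ, ℓ)-quasiperiodic family and let u ∈ [0, 1]. Then for all x, y ∈ E, ∫₀¹ (β_{t+u} ∧_B β̇_{t+u})(x, y) dt = ∫₀¹ (β_t ∧_B β̇_t)(x, y) dt − ( ℓ ∧_B (β_u − β_0) )(x, y). -/

import Mathlib

/-- `(a ∧_B b)(x, y) = B(a x, b y) - B(a y, b x)` for maps `a, b : E → 𝔤`. -/
def wedgeB {𝔤 E : Type*} [NormedAddCommGroup 𝔤] [NormedSpace ℝ 𝔤]
    [AddCommGroup E] [Module ℝ E]
    (B : 𝔤 →ₗ[ℝ] 𝔤 →ₗ[ℝ] ℝ) (a b : E → 𝔤) (x y : E) : ℝ :=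
  B (a x) (b y) - B (a y) (b x)

/-- A `(φ, r)`-quasiperiodic family of linear maps `E → 𝔤`: smooth in `t` and
`β (t+1) = φ ∘ β t - r`. -/
def QuasiPeriodic {𝔤 E : Type*} [NormedAddCommGroup 𝔤] [NormedSpace ℝ 𝔤]
    [AddCommGroup E] [Module ℝ E]
    (φ : 𝔤 → 𝔤) (r : E → 𝔤) (β : ℝ → E →ₗ[ℝ] 𝔤) : Prop :=
  (∀ x : E, ContDiff ℝ (⊤ : ℕ∞) (fun t => β t x)) ∧
  ∀ (t : ℝ) (x : E), β (t + 1) x = φ (β t x) - r x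

/-!
Differentiating the quasiperiodicity relation gives `β̇_{t+1} = φ ∘ β̇_t`, so, since `φ` preserves
`B`, the integrand `f t = (β_t ∧_B β̇_t)(x, y)` satisfies `f (t + 1) = f t - (ℓ ∧_B β̇_t)(x, y)`.
Shifting the window of integration by `u` changes `∫₀¹ f` by `∫₀ᵘ (f (t + 1) - f t) dt`, which by
the fundamental theorem of calculus is `-(ℓ ∧_B (β_u - β_0))(x, y)`.
-/

theorem integral_comp_add_right_sub_integral {F : Type*} [NormedAddCommGroup F]
    [NormedSpace ℝ F] {f : ℝ → F} (hf : Continuous f) (T u : ℝ) :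
    (∫ t in (0:ℝ)..T, f (t + u)) - ∫ t in (0:ℝ)..T, f t
      = ∫ t in (0:ℝ)..u, (f (t + T) - f t) := by
  have hfT : Continuous fun t => f (t + T) := hf.comp (continuous_add_const T)
  rw [intervalIntegral.integral_comp_add_right, zero_add,
    intervalIntegral.integral_interval_sub_interval_comm' (hf.intervalIntegrable _ _)
      (hf.intervalIntegrable _ _) (hf.intervalIntegrable _ _),
    intervalIntegral.integral_sub (hfT.intervalIntegrable _ _) (hf.intervalIntegrable _ _),
    intervalIntegral.integral_comp_add_right, zero_add, add_comm u T]

section Wedge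

variable {𝔤 E : Type*} [NormedAddCommGroup 𝔤] [NormedSpace ℝ 𝔤] [AddCommGroup E] [Module ℝ E]
  (B : 𝔤 →ₗ[ℝ] 𝔤 →ₗ[ℝ] ℝ)

theorem wedgeB_map_sub_map {φ : 𝔤 → 𝔤} (hφB : ∀ g h : 𝔤, B (φ g) (φ h) = B g h)
    (a c b : E → 𝔤) (x y : E) :
    wedgeB B (fun e => φ (a e) - φ (c e)) (fun e => φ (b e)) x y
      = wedgeB B a b x y - wedgeB B c b x y := by
  simp only [wedgeB, map_sub, LinearMap.sub_apply, hφB]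
  ring

variable [FiniteDimensional ℝ 𝔤]

theorem continuous_wedgeB {a b : ℝ → E → 𝔤} (ha : ∀ e, Continuous fun t => a t e)
    (hb : ∀ e, Continuous fun t => b t e) (x y : E) :
    Continuous fun t => wedgeB B (a t) (b t) x y :=
  have hB : ∀ e e', Continuous fun t => B (a t e) (b t e') := fun e e' =>
    B.toContinuousBilinearMap.continuous₂.comp ((ha e).prodMk (hb e'))
  (hB x y).sub (hB y x)

theorem hasDerivAt_wedgeB_right (a : E → 𝔤) {γ : ℝ → E → 𝔤} {γ' : E → 𝔤} {t : ℝ}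
    (hγ : ∀ e, HasDerivAt (fun s => γ s e) (γ' e) t) (x y : E) :
    HasDerivAt (fun s => wedgeB B a (γ s) x y) (wedgeB B a γ' x y) t :=
  have hB : ∀ g e, HasDerivAt (fun s => B g (γ s e)) (B g (γ' e)) t := fun g e =>
    (B g).toContinuousLinearMap.hasFDerivAt.comp_hasDerivAt t (hγ e)
  (hB (a x) y).sub (hB (a y) x)

theorem integral_wedgeB_deriv (a : E → 𝔤) {γ : ℝ → E → 𝔤}
    (hγ : ∀ e, ContDiff ℝ 1 fun t => γ t e) (x y : E) (t₀ t₁ : ℝ) :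
    ∫ t in t₀..t₁, wedgeB B a (fun e => deriv (fun s => γ s e) t) x y
      = wedgeB B a (fun e => γ t₁ e - γ t₀ e) x y := by
  have hderiv : ∀ t, HasDerivAt (fun s => wedgeB B a (γ s) x y)
      (wedgeB B a (fun e => deriv (fun s => γ s e) t) x y) t := fun t =>
    hasDerivAt_wedgeB_right B a (fun e => ((hγ e).differentiable one_ne_zero t).hasDerivAt) x y
  have hcont : Continuous fun t => wedgeB B a (fun e => deriv (fun s => γ s e) t) x y :=
    continuous_wedgeB B (a := fun _ => a) (fun _ => continuous_const)
      (fun e => (hγ e).continuous_deriv le_rfl) x y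
  rw [intervalIntegral.integral_eq_sub_of_hasDerivAt (fun t _ => hderiv t)
    (hcont.intervalIntegrable _ _)]
  simp only [wedgeB, map_sub]
  ring

end Wedge

/-- The integrand `(β_t ∧_B β̇_t)(x, y)` of the functional `Q`. -/
noncomputable def wedgeDeriv {𝔤 E : Type*} [NormedAddCommGroup 𝔤] [NormedSpace ℝ 𝔤]
    [AddCommGroup E] [Module ℝ E] (B : 𝔤 →ₗ[ℝ] 𝔤 →ₗ[ℝ] ℝ) (β : ℝ → E →ₗ[ℝ] 𝔤) (t : ℝ) : E → E → ℝ :=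
  wedgeB B (β t) (fun e => deriv (fun s => β s e) t)

namespace QuasiPeriodic

variable {𝔤 E : Type*} [NormedAddCommGroup 𝔤] [NormedSpace ℝ 𝔤] [AddCommGroup E] [Module ℝ E]
  {φ : 𝔤 →L[ℝ] 𝔤} {r : E → 𝔤} {β : ℝ → E →ₗ[ℝ] 𝔤}

theorem deriv_add_one (hβ : QuasiPeriodic φ r β) (t : ℝ) (e : E) :
    deriv (fun s => β s e) (t + 1) = φ (deriv (fun s => β s e) t) := by
  have hβe : HasDerivAt (fun s => β s e) (deriv (fun s => β s e) t) t :=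
    ((hβ.1 e).differentiable (by simp) t).hasDerivAt
  rw [← deriv_comp_add_const, funext fun s => hβ.2 s e]
  exact ((φ.hasFDerivAt.comp_hasDerivAt t hβe).sub_const (r e)).deriv

theorem wedgeDeriv_add_one (B : 𝔤 →ₗ[ℝ] 𝔤 →ₗ[ℝ] ℝ) (hφB : ∀ g h : 𝔤, B (φ g) (φ h) = B g h)
    {ℓ : E → 𝔤} (hβ : QuasiPeriodic φ (fun e => φ (ℓ e)) β) (t : ℝ) (x y : E) :
    wedgeDeriv B β (t + 1) x y
      = wedgeDeriv B β t x y - wedgeB B ℓ (fun e => deriv (fun s => β s e) t) x y := by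
  have hβt : ⇑(β (t + 1)) = fun e => φ (β t e) - φ (ℓ e) := funext (hβ.2 t)
  have hβ't : (fun e => deriv (fun s => β s e) (t + 1))
      = fun e => φ (deriv (fun s => β s e) t) := funext (hβ.deriv_add_one t)
  rw [wedgeDeriv, hβt, hβ't, wedgeB_map_sub_map B hφB]
  rfl

end QuasiPeriodic

theorem Q_integral_shift_general
    {𝔤 E : Type*} [NormedAddCommGroup 𝔤] [NormedSpace ℝ 𝔤] [FiniteDimensional ℝ 𝔤]
    [AddCommGroup E] [Module ℝ E]
    (B : 𝔤 →ₗ[ℝ] 𝔤 →ₗ[ℝ] ℝ)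
    (φ : 𝔤 ≃ₗ[ℝ] 𝔤)
    (hφB : ∀ x y : 𝔤, B (φ x) (φ y) = B x y)
    (ℓ : E →ₗ[ℝ] 𝔤)
    (β : ℝ → E →ₗ[ℝ] 𝔤)
    (hβ : QuasiPeriodic ⇑φ (fun x => φ (ℓ x)) β)
    (u : ℝ) (x y : E) :
    (∫ t in (0:ℝ)..1,
        wedgeB B (⇑(β (t + u))) (fun e => deriv (fun s => β s e) (t + u)) x y)
      = (∫ t in (0:ℝ)..1,
          wedgeB B (⇑(β t)) (fun e => deriv (fun s => β s e) t) x y)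
        - wedgeB B (⇑ℓ) (fun e => β u e - β 0 e) x y := by
  have hβc : QuasiPeriodic (φ.toContinuousLinearEquiv : 𝔤 →L[ℝ] 𝔤)
      (fun e => φ.toContinuousLinearEquiv (ℓ e)) β := hβ
  have hsmooth : ∀ e, ContDiff ℝ 1 fun t => β t e := fun e => (hβ.1 e).of_le (by simp)
  have hcont : Continuous fun t => wedgeDeriv B β t x y :=
    continuous_wedgeB B (fun e => (hsmooth e).continuous)
      (fun e => (hsmooth e).continuous_deriv le_rfl) x y
  have hshift := integral_comp_add_right_sub_integral hcont 1 u
  simp only [hβc.wedgeDeriv_add_one B hφB, sub_sub_cancel_left, intervalIntegral.integral_neg,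
    integral_wedgeB_deriv B ℓ hsmooth] at hshift
  change ∫ t in (0:ℝ)..1, wedgeDeriv B β (t + u) x y
    = (∫ t in (0:ℝ)..1, wedgeDeriv B β t x y) - _
  linear_combination hshift

/-- for a `(φ, ℓ)`-quasiperiodic family `β` (with `r = φ ∘ ℓ`) and
`u ∈ [0,1]`, `∫₀¹ (β_{t+u} ∧_B β̇_{t+u}) dt = ∫₀¹ (β_t ∧_B β̇_t) dt - ℓ ∧_B (β_u - β_0)`. -/
theorem Q_integral_shift
    {𝔤 E : Type*} [NormedAddCommGroup 𝔤] [NormedSpace ℝ 𝔤] [FiniteDimensional ℝ 𝔤]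
    [AddCommGroup E] [Module ℝ E]
    (br : 𝔤 →ₗ[ℝ] 𝔤 →ₗ[ℝ] 𝔤)
    (br_alt : ∀ x : 𝔤, br x x = 0)
    (br_jacobi : ∀ x y z : 𝔤, br (br x y) z + br (br y z) x + br (br z x) y = 0)
    (B : 𝔤 →ₗ[ℝ] 𝔤 →ₗ[ℝ] ℝ)
    (B_symm : ∀ x y : 𝔤, B x y = B y x)
    (B_inv : ∀ x y z : 𝔤, B (br x y) z = B x (br y z))
    (φ : 𝔤 ≃ₗ[ℝ] 𝔤)
    (hφbr : ∀ x y : 𝔤, φ (br x y) = br (φ x) (φ y))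
    (hφB : ∀ x y : 𝔤, B (φ x) (φ y) = B x y)
    (ℓ : E →ₗ[ℝ] 𝔤)
    (β : ℝ → E →ₗ[ℝ] 𝔤)
    (hβ : QuasiPeriodic ⇑φ (fun x => φ (ℓ x)) β)
    (u : ℝ) (hu : u ∈ Set.Icc (0 : ℝ) 1) (x y : E) :
    (∫ t in (0:ℝ)..1,
        wedgeB B (⇑(β (t + u))) (fun e => deriv (fun s => β s e) (t + u)) x y)
      = (∫ t in (0:ℝ)..1,
          wedgeB B (⇑(β t)) (fun e => deriv (fun s => β s e) t) x y)
        - wedgeB B (⇑ℓ) (fun e => β u e - β 0 e) x y :=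
  Q_integral_shift_general B φ hφB ℓ β hβ u x y
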